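/- For every M ∈ (0,1), the maximal energies satisfy the scaling lower bound I_M ≥ M^{4/3}·I₁, where I₁ is the maximal energy for impulse 1. -/

import Mathlib

open MeasureTheory Real Set NNReal Filter Topology

noncomputable section

/-- The upper half plane `ℝ²₊`. -/
def H : Set (ℝ × ℝ) := {p | 0 < p.2}

/-- The half-plane Green function
`G(x,y) = (1/(4π)) log(1 + 4 x₂ y₂ / |x-y|²)` (Euclidean distance). -/
def G (x y : ℝ × ℝ) : ℝ :=
  (1 / (4 * π)) * Real.log (1 + 4 * x.2 * y.2 / ((x.1 - y.1) ^ 2 + (x.2 - y.2) ^ 2))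

/-- The potential `𝒢[ω](x) = ∫_{ℝ²₊} G(x,y) ω(y) dy`. -/
def Gpot (ω : ℝ × ℝ → ℝ) (x : ℝ × ℝ) : ℝ := ∫ y in H, G x y * ω y

/-- The kinetic energy `E(ω) = (1/2) ∫∫ G(x,y) ω(x) ω(y) dy dx`. -/
def energy (ω : ℝ × ℝ → ℝ) : ℝ :=
  (1 / 2) * ∫ x in H, ∫ y in H, G x y * ω x * ω y

/-- The `L¹(ℝ²₊)` norm (mass). -/
def norm1 (ω : ℝ × ℝ → ℝ) : ℝ := ∫ x in H, |ω x|

/-- The `L²(ℝ²₊)` norm. -/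
def norm2 (ω : ℝ × ℝ → ℝ) : ℝ := (∫ x in H, ω x ^ 2) ^ ((1 : ℝ) / 2)

/-- The impulse `‖x₂ ω‖₁ = ∫_{ℝ²₊} x₂ |ω(x)| dx`. -/
def impulse (ω : ℝ × ℝ → ℝ) : ℝ := ∫ x in H, x.2 * |ω x|

/-- `ω ∈ (L¹ ∩ L²)(ℝ²₊)`. -/
def MemL1L2 (ω : ℝ × ℝ → ℝ) : Prop :=
  Integrable ω (volume.restrict H) ∧ Integrable (fun x => ω x ^ 2) (volume.restrict H)

/-- Finiteness of the impulse `‖x₂ ω‖₁ < ∞`. -/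
def ImpulseFinite (ω : ℝ × ℝ → ℝ) : Prop :=
  Integrable (fun x : ℝ × ℝ => x.2 * |ω x|) (volume.restrict H)

/-- The admissible class `K_M`: patches `ω = 1_A` a.e. on `ℝ²₊` with
impulse `∫_A x₂ = M` and mass `|A| ≤ 1`. -/
def memK (M : ℝ) (ω : ℝ × ℝ → ℝ) : Prop :=
  Integrable ω (volume.restrict H) ∧
  ∃ A : Set (ℝ × ℝ), A ⊆ H ∧ MeasurableSet A ∧
    (∀ᵐ x ∂volume.restrict H, ω x = A.indicator (fun _ => (1 : ℝ)) x) ∧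
    (∫ x in A, x.2) = M ∧ volume A ≤ 1

/-- The admissible class `K_{M,∞}`: patches `ω = 1_A` a.e. on `ℝ²₊` with
impulse `∫_A x₂ = M`, without any mass bound. -/
def memKinf (M : ℝ) (ω : ℝ × ℝ → ℝ) : Prop :=
  Integrable ω (volume.restrict H) ∧
  ∃ A : Set (ℝ × ℝ), A ⊆ H ∧ MeasurableSet A ∧
    (∀ᵐ x ∂volume.restrict H, ω x = A.indicator (fun _ => (1 : ℝ)) x) ∧
    (∫ x in A, x.2) = M

/-- The relaxed admissible class `K̃_M`: measurable `0 ≤ ω ≤ 1` with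
mass `≤ 1` and impulse `≤ M`. -/
def memKt (M : ℝ) (ω : ℝ × ℝ → ℝ) : Prop :=
  Integrable ω (volume.restrict H) ∧
  (∀ᵐ x ∂volume.restrict H, 0 ≤ ω x ∧ ω x ≤ 1) ∧
  norm1 ω ≤ 1 ∧
  Integrable (fun x : ℝ × ℝ => x.2 * |ω x|) (volume.restrict H) ∧
  impulse ω ≤ M

/-- The set of maximizers `S_M` of the energy over `K_M`. -/
def memS (M : ℝ) (ω : ℝ × ℝ → ℝ) : Prop :=
  memK M ω ∧ ∀ ω' : ℝ × ℝ → ℝ, memK M ω' → energy ω' ≤ energy ω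

/-- The maximal energy `I_M` over `K_M`. -/
def Isup (M : ℝ) : ℝ := sSup (energy '' {ω | memK M ω})

/-- The maximal energy `I_{1,∞}` over `K_{1,∞}`. -/
def IsupInf : ℝ := sSup (energy '' {ω | memKinf 1 ω})

/-- The Steiner symmetry condition for a set `Ω ⊆ ℝ²₊`. -/
def SteinerSet (Ω : Set (ℝ × ℝ)) : Prop :=
  (∀ x₁ x₂ : ℝ, 0 < x₂ → (((x₁, x₂) : ℝ × ℝ) ∈ Ω ↔ ((-x₁, x₂) : ℝ × ℝ) ∈ Ω)) ∧
  (∀ x₂ : ℝ, 0 < x₂ → ∀ a b : ℝ, 0 ≤ a → a ≤ b →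
    ((b, x₂) : ℝ × ℝ) ∈ Ω → ((a, x₂) : ℝ × ℝ) ∈ Ω)

/-- The Steiner symmetry condition for a nonnegative function on `ℝ²₊`. -/
def SteinerFn (f : ℝ × ℝ → ℝ) : Prop :=
  (∀ x₁ x₂ : ℝ, 0 < x₂ → f (x₁, x₂) = f (-x₁, x₂)) ∧
  (∀ x₂ : ℝ, 0 < x₂ → ∀ a b : ℝ, 0 ≤ a → a ≤ b → f (b, x₂) ≤ f (a, x₂))



open scoped ENNReal Pointwise

namespace EnergyScalingAux

lemma measurable_H : MeasurableSet H := measurableSet_lt measurable_const measurable_snd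

lemma measurable_uncurry_G : Measurable (Function.uncurry G) := by
  unfold Function.uncurry G
  exact (Real.measurable_log.comp (by fun_prop)).const_mul _

lemma measurable_G_left (x : ℝ × ℝ) : Measurable (G x) :=
  measurable_uncurry_G.comp (measurable_const.prodMk measurable_id)

lemma G_nonneg {x y : ℝ × ℝ} (hx : x ∈ H) (hy : y ∈ H) : 0 ≤ G x y := by
  have hπ : (0:ℝ) < π := Real.pi_pos
  apply mul_nonneg (by positivity)
  apply Real.log_nonneg
  have : 0 ≤ 4 * x.2 * y.2 / ((x.1 - y.1) ^ 2 + (x.2 - y.2) ^ 2) := by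
    apply div_nonneg (by nlinarith [hx.out, hy.out]) (by positivity)
  linarith

lemma G_pointwise_bound {x y : ℝ × ℝ} (hx : x ∈ H) (hy : y ∈ H) :
    ENNReal.ofReal (G x y) ≤ ENNReal.ofReal (Real.log 5 / (4 * π))
      + ENNReal.ofReal (Real.log (15 * x.2 ^ 2) / (4 * π))
      + ENNReal.ofReal ((- Real.log ((x.1 - y.1) ^ 2 + (x.2 - y.2) ^ 2)) / (4 * π)) := by
  have hπ : (0:ℝ) < π := Real.pi_pos
  have hx2 : 0 < x.2 := hx.out
  have hy2 : 0 < y.2 := hy.out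
  have hGdef : G x y = (1 / (4 * π)) *
      Real.log (1 + 4 * x.2 * y.2 / ((x.1 - y.1) ^ 2 + (x.2 - y.2) ^ 2)) := rfl
  set d2 : ℝ := (x.1 - y.1) ^ 2 + (x.2 - y.2) ^ 2 with hd2
  have hd2nn : 0 ≤ d2 := by positivity
  rcases eq_or_lt_of_le hd2nn with h0 | hpos
  · have : G x y = 0 := by
      rw [hGdef, ← h0, div_zero, add_zero, Real.log_one, mul_zero]
    rw [this, ENNReal.ofReal_zero]; exact zero_le
  rcases le_or_gt (x.2 * y.2) d2 with hc | hc
  · -- far case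
    have harg : 1 + 4 * x.2 * y.2 / d2 ≤ 5 := by
      have : 4 * x.2 * y.2 / d2 ≤ 4 := by
        rw [div_le_iff₀ hpos]; nlinarith
      linarith
    have hG : G x y ≤ Real.log 5 / (4 * π) := by
      rw [hGdef, mul_comm, ← div_eq_mul_one_div]
      apply div_le_div_of_nonneg_right _ (by positivity)
      exact Real.log_le_log (by positivity) harg
    calc ENNReal.ofReal (G x y) ≤ ENNReal.ofReal (Real.log 5 / (4 * π)) :=
          ENNReal.ofReal_le_ofReal hG
      _ ≤ _ := le_add_of_le_of_nonneg (le_add_of_le_of_nonneg le_rfl zero_le) zero_le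
  · -- near case
    have hy3 : y.2 < 3 * x.2 := by nlinarith
    have harg : 1 + 4 * x.2 * y.2 / d2 ≤ 15 * x.2 ^ 2 / d2 := by
      rw [le_div_iff₀ hpos, add_mul, one_mul, div_mul_cancel₀ _ (ne_of_gt hpos)]
      nlinarith
    have hG : G x y ≤ Real.log (15 * x.2 ^ 2) / (4 * π) + (- Real.log d2) / (4 * π) := by
      have h1 : Real.log (1 + 4 * x.2 * y.2 / d2) ≤ Real.log (15 * x.2 ^ 2 / d2) :=
        Real.log_le_log (by positivity) harg
      have h2 : Real.log (15 * x.2 ^ 2 / d2) = Real.log (15 * x.2 ^ 2) - Real.log d2 :=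
        Real.log_div (by positivity) (ne_of_gt hpos)
      rw [hGdef]
      calc (1 / (4 * π)) * Real.log (1 + 4 * x.2 * y.2 / d2)
          ≤ (1 / (4 * π)) * (Real.log (15 * x.2 ^ 2) - Real.log d2) := by
            apply mul_le_mul_of_nonneg_left _ (by positivity)
            rw [← h2]; exact h1
        _ = Real.log (15 * x.2 ^ 2) / (4 * π) + (- Real.log d2) / (4 * π) := by ring
    calc ENNReal.ofReal (G x y)
        ≤ ENNReal.ofReal (Real.log (15 * x.2 ^ 2) / (4 * π) + (- Real.log d2) / (4 * π)) :=
          ENNReal.ofReal_le_ofReal hG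
      _ ≤ ENNReal.ofReal (Real.log (15 * x.2 ^ 2) / (4 * π))
          + ENNReal.ofReal ((- Real.log d2) / (4 * π)) := ENNReal.ofReal_add_le
      _ ≤ _ := by rw [add_assoc]; exact le_add_self

lemma neglog_integral_bound (x : ℝ × ℝ) :
    ∫⁻ y : ℝ × ℝ, ENNReal.ofReal ((- Real.log ((x.1 - y.1) ^ 2 + (x.2 - y.2) ^ 2)) / (4 * π))
      ≤ ENNReal.ofReal (1 / π) := by
  have hπ : (0:ℝ) < π := Real.pi_pos
  set f : ℝ × ℝ → ℝ :=
    fun y => max ((- Real.log ((x.1 - y.1) ^ 2 + (x.2 - y.2) ^ 2)) / (4 * π)) 0 with hf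
  have hmax : ∀ a : ℝ, ENNReal.ofReal (max a 0) = ENNReal.ofReal a := by
    intro a
    rcases le_total a 0 with h | h
    · rw [max_eq_right h, ENNReal.ofReal_zero, ENNReal.ofReal_of_nonpos h]
    · rw [max_eq_left h]
  have hcongr : ∀ y : ℝ × ℝ,
      ENNReal.ofReal ((- Real.log ((x.1 - y.1) ^ 2 + (x.2 - y.2) ^ 2)) / (4 * π))
        = ENNReal.ofReal (f y) := fun y => (hmax _).symm
  calc ∫⁻ y : ℝ × ℝ, ENNReal.ofReal ((- Real.log ((x.1 - y.1) ^ 2 + (x.2 - y.2) ^ 2)) / (4 * π))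
      = ∫⁻ y : ℝ × ℝ, ENNReal.ofReal (f y) := lintegral_congr hcongr
    _ = ∫⁻ t in Ioi (0:ℝ), volume {a : ℝ × ℝ | t < f a} := by
        apply lintegral_eq_lintegral_meas_lt volume (ae_of_all _ fun y => le_max_right _ _)
        have : Measurable f := by
          apply Measurable.max _ measurable_const
          exact ((Real.measurable_log.comp (by fun_prop)).neg).div_const _
        exact this.aemeasurable
    _ ≤ ∫⁻ t in Ioi (0:ℝ), ENNReal.ofReal (4 * Real.exp (-(4 * π) * t)) := by
        apply setLIntegral_mono' measurableSet_Ioi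
        intro t ht
        set s : ℝ := Real.exp (-(4 * π) * t) with hs
        have hspos : 0 < s := Real.exp_pos _
        have hsub : {a : ℝ × ℝ | t < f a} ⊆
            (Ioo (x.1 - Real.sqrt s) (x.1 + Real.sqrt s)) ×ˢ
            (Ioo (x.2 - Real.sqrt s) (x.2 + Real.sqrt s)) := by
          intro a ha
          simp only [mem_setOf_eq, hf] at ha
          have ht0 : (0:ℝ) < t := ht
          have hlt : t < (- Real.log ((x.1 - a.1) ^ 2 + (x.2 - a.2) ^ 2)) / (4 * π) := by
            rcases max_cases ((- Real.log ((x.1 - a.1) ^ 2 + (x.2 - a.2) ^ 2)) / (4 * π)) (0:ℝ)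
              with ⟨he, _⟩ | ⟨he, hle⟩
            · rwa [he] at ha
            · rw [he] at ha; linarith
          set d2 : ℝ := (x.1 - a.1) ^ 2 + (x.2 - a.2) ^ 2 with hd2
          have hlog : Real.log d2 < -(4 * π) * t := by
            have h' := (lt_div_iff₀ (by positivity : (0:ℝ) < 4 * π)).mp hlt
            linarith
          have hd2pos : 0 < d2 := by
            by_contra hcon
            push_neg at hcon
            have h0 : d2 = 0 := le_antisymm hcon (by positivity)
            rw [h0, Real.log_zero] at hlog
            nlinarith
          have hd2lt : d2 < s := by
            rw [hs]
            exact (Real.log_lt_iff_lt_exp hd2pos).mp hlog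
          have h1 : |x.1 - a.1| < Real.sqrt s := by
            rw [← Real.sqrt_sq_eq_abs]
            apply Real.sqrt_lt_sqrt (sq_nonneg _)
            nlinarith [sq_nonneg (x.2 - a.2)]
          have h2 : |x.2 - a.2| < Real.sqrt s := by
            rw [← Real.sqrt_sq_eq_abs]
            apply Real.sqrt_lt_sqrt (sq_nonneg _)
            nlinarith [sq_nonneg (x.1 - a.1)]
          rw [abs_lt] at h1 h2
          constructor
          · constructor <;> [linarith [h1.2]; linarith [h1.1]]
          · constructor <;> [linarith [h2.2]; linarith [h2.1]]
        calc volume {a : ℝ × ℝ | t < f a}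
            ≤ volume ((Ioo (x.1 - Real.sqrt s) (x.1 + Real.sqrt s)) ×ˢ
              (Ioo (x.2 - Real.sqrt s) (x.2 + Real.sqrt s))) := measure_mono hsub
          _ = ENNReal.ofReal (4 * s) := by
              rw [Measure.volume_eq_prod, Measure.prod_prod, Real.volume_Ioo, Real.volume_Ioo]
              have e1 : x.1 + Real.sqrt s - (x.1 - Real.sqrt s) = 2 * Real.sqrt s := by ring
              have e2 : x.2 + Real.sqrt s - (x.2 - Real.sqrt s) = 2 * Real.sqrt s := by ring
              rw [e1, e2, ← ENNReal.ofReal_mul (by positivity)]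
              congr 1
              have := Real.mul_self_sqrt hspos.le
              nlinarith [this]
          _ = ENNReal.ofReal (4 * Real.exp (-(4 * π) * t)) := by rw [hs]
    _ = ENNReal.ofReal (∫ t in Ioi (0:ℝ), 4 * Real.exp (-(4 * π) * t)) := by
        rw [ofReal_integral_eq_lintegral_ofReal]
        · exact (exp_neg_integrableOn_Ioi 0 (by positivity)).const_mul 4
        · exact ae_of_all _ fun t => by positivity
    _ ≤ ENNReal.ofReal (1 / π) := by
        apply ENNReal.ofReal_le_ofReal
        have hcomp : (∫ t in Ioi (0:ℝ), 4 * Real.exp (-(4 * π) * t))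
            = (4 * π)⁻¹ * ∫ u in Ioi (0:ℝ), 4 * Real.exp (-u) := by
          have := integral_comp_mul_left_Ioi (fun u => 4 * Real.exp (-u)) 0
            (by positivity : (0:ℝ) < 4 * π)
          simp only [mul_zero, smul_eq_mul] at this
          rw [← this]
          congr 1 with t
          ring_nf
        rw [hcomp, MeasureTheory.integral_const_mul, integral_exp_neg_Ioi_zero]
        rw [mul_one]
        rw [div_eq_mul_inv, one_mul]
        rw [mul_inv]
        nlinarith [Real.pi_pos, mul_pos Real.pi_pos Real.pi_pos]

/-- A constant dominating the "local" part of the Green-function integral. -/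
def c₀ : ℝ := (Real.log 5 + Real.log 15) / (4 * π) + 1 / π

lemma c₀_nonneg : 0 ≤ c₀ := by
  unfold c₀
  have h5 : (0:ℝ) ≤ Real.log 5 := Real.log_nonneg (by norm_num)
  have h15 : (0:ℝ) ≤ Real.log 15 := Real.log_nonneg (by norm_num)
  have := Real.pi_pos
  positivity

lemma inner_bound {A : Set (ℝ × ℝ)} (hA : A ⊆ H) (hAm : MeasurableSet A)
    (hμ : volume A ≤ 1) {x : ℝ × ℝ} (hx : x ∈ H) :
    ∫⁻ y in A, ENNReal.ofReal (G x y) ≤ ENNReal.ofReal (c₀ + x.2 / (2 * π)) := by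
  have hπ : (0:ℝ) < π := Real.pi_pos
  have hx2 : 0 < x.2 := hx.out
  set C : ℝ≥0∞ := ENNReal.ofReal (Real.log 5 / (4 * π))
      + ENNReal.ofReal (Real.log (15 * x.2 ^ 2) / (4 * π)) with hC
  set e : ℝ × ℝ → ℝ≥0∞ :=
    fun y => ENNReal.ofReal ((- Real.log ((x.1 - y.1) ^ 2 + (x.2 - y.2) ^ 2)) / (4 * π)) with he
  calc ∫⁻ y in A, ENNReal.ofReal (G x y)
      ≤ ∫⁻ y in A, (C + e y) := by
        apply setLIntegral_mono' hAm
        intro y hy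
        rw [hC, he]
        simpa only [add_assoc] using G_pointwise_bound hx (hA hy)
    _ = C * volume A + ∫⁻ y in A, e y := by
        rw [lintegral_add_left measurable_const, setLIntegral_const]
    _ ≤ C * 1 + ENNReal.ofReal (1 / π) := by
        apply add_le_add
        · exact mul_le_mul_right hμ _
        · exact le_trans (setLIntegral_le_lintegral _ _) (neglog_integral_bound x)
    _ ≤ ENNReal.ofReal (c₀ + x.2 / (2 * π)) := by
        rw [mul_one, hC]
        have hb : ENNReal.ofReal (Real.log (15 * x.2 ^ 2) / (4 * π))
            ≤ ENNReal.ofReal ((Real.log 15 + 2 * x.2) / (4 * π)) := by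
          apply ENNReal.ofReal_le_ofReal
          apply div_le_div_of_nonneg_right _ (by positivity)
          · rw [Real.log_mul (by norm_num) (by positivity), Real.log_pow]
            have : Real.log x.2 ≤ x.2 := (Real.log_le_sub_one_of_pos hx2).trans (by linarith)
            push_cast
            linarith
        have ha : (0:ℝ) ≤ Real.log 5 / (4 * π) :=
          div_nonneg (Real.log_nonneg (by norm_num)) (by positivity)
        have hb' : (0:ℝ) ≤ (Real.log 15 + 2 * x.2) / (4 * π) :=
          div_nonneg (by nlinarith [Real.log_nonneg (show (1:ℝ) ≤ 15 by norm_num)]) (by positivity)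
        calc ENNReal.ofReal (Real.log 5 / (4 * π)) + ENNReal.ofReal (Real.log (15 * x.2 ^ 2) / (4 * π))
              + ENNReal.ofReal (1 / π)
            ≤ ENNReal.ofReal (Real.log 5 / (4 * π)) + ENNReal.ofReal ((Real.log 15 + 2 * x.2) / (4 * π))
              + ENNReal.ofReal (1 / π) := add_le_add (add_le_add le_rfl hb) le_rfl
          _ = ENNReal.ofReal (Real.log 5 / (4 * π) + (Real.log 15 + 2 * x.2) / (4 * π) + 1 / π) := by
              rw [← ENNReal.ofReal_add ha hb', ← ENNReal.ofReal_add (add_nonneg ha hb') (by positivity)]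
          _ ≤ ENNReal.ofReal (c₀ + x.2 / (2 * π)) :=
              ENNReal.ofReal_le_ofReal (le_of_eq (by unfold c₀; ring))

lemma inner_ne_top {A : Set (ℝ × ℝ)} (hA : A ⊆ H) (hAm : MeasurableSet A)
    (hμ : volume A ≤ 1) {x : ℝ × ℝ} (hx : x ∈ H) :
    ∫⁻ y in A, ENNReal.ofReal (G x y) ≠ ⊤ :=
  ne_top_of_le_ne_top ENNReal.ofReal_ne_top (inner_bound hA hAm hμ hx)

lemma energy_repr {A : Set (ℝ × ℝ)} (hA : A ⊆ H) (hAm : MeasurableSet A)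
    (hμ : volume A ≤ 1) {ω : ℝ × ℝ → ℝ}
    (hω : ∀ᵐ x ∂volume.restrict H, ω x = A.indicator (fun _ => (1 : ℝ)) x) :
    energy ω = (1 / 2) * (∫⁻ x in A, ∫⁻ y in A, ENNReal.ofReal (G x y)).toReal := by
  have hAH : A ∩ H = A := inter_eq_self_of_subset_left hA
  set g : ℝ × ℝ → ℝ := fun x => (∫⁻ y in A, ENNReal.ofReal (G x y)).toReal with hg
  have hgm : Measurable g := by
    apply Measurable.ennreal_toReal
    apply Measurable.lintegral_prod_right (f := fun x y => ENNReal.ofReal (G x y))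
    exact ENNReal.measurable_ofReal.comp measurable_uncurry_G
  have hae : ∀ᵐ x ∂volume.restrict H,
      (∫ y in H, G x y * ω x * ω y) = A.indicator g x := by
    filter_upwards [hω, ae_restrict_mem measurable_H] with x hx hxH
    have h1 : (∫ y in H, G x y * ω x * ω y) = ω x * ∫ y in H, G x y * ω y := by
      rw [← integral_const_mul]
      congr 1; funext y; ring
    have h2 : (∫ y in H, G x y * ω y) = ∫ y in H, A.indicator (G x) y := by
      apply integral_congr_ae
      filter_upwards [hω] with y hy
      rw [hy]
      by_cases hyA : y ∈ A <;> simp [hyA]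
    have h3 : (∫ y in H, A.indicator (G x) y) = ∫ y in A, G x y := by
      rw [integral_indicator hAm, Measure.restrict_restrict hAm, hAH]
    have h4 : (∫ y in A, G x y) = g x := by
      rw [hg]
      apply integral_eq_lintegral_of_nonneg_ae
      · filter_upwards [ae_restrict_mem hAm] with y hyA
        exact G_nonneg hxH (hA hyA)
      · exact (measurable_G_left x).aestronglyMeasurable
    rw [h1, h2, h3, h4, hx]
    by_cases hxA : x ∈ A <;> simp [hxA]
  have hmain : (∫ x in H, ∫ y in H, G x y * ω x * ω y)
      = (∫⁻ x in A, ∫⁻ y in A, ENNReal.ofReal (G x y)).toReal := by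
    rw [integral_congr_ae hae, integral_indicator hAm, Measure.restrict_restrict hAm, hAH]
    rw [integral_eq_lintegral_of_nonneg_ae
      (ae_of_all _ fun x => ENNReal.toReal_nonneg) hgm.aestronglyMeasurable]
    congr 1
    apply lintegral_congr_ae
    filter_upwards [ae_restrict_mem hAm] with x hxA
    exact ENNReal.ofReal_toReal (inner_ne_top hA hAm hμ (hA hxA))
  unfold energy
  rw [hmain]

lemma energy_nonneg {A : Set (ℝ × ℝ)} (hA : A ⊆ H) (hAm : MeasurableSet A)
    (hμ : volume A ≤ 1) {ω : ℝ × ℝ → ℝ}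
    (hω : ∀ᵐ x ∂volume.restrict H, ω x = A.indicator (fun _ => (1 : ℝ)) x) :
    0 ≤ energy ω := by
  rw [energy_repr hA hAm hμ hω]
  positivity

lemma energy_le {A : Set (ℝ × ℝ)} (hA : A ⊆ H) (hAm : MeasurableSet A)
    (hμ : volume A ≤ 1) (him : ∫⁻ x in A, ENNReal.ofReal x.2 ≤ 1) {ω : ℝ × ℝ → ℝ}
    (hω : ∀ᵐ x ∂volume.restrict H, ω x = A.indicator (fun _ => (1 : ℝ)) x) :
    energy ω ≤ (1 / 2) * (c₀ + 1 / (2 * π)) := by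
  have hπ : (0:ℝ) < π := Real.pi_pos
  rw [energy_repr hA hAm hμ hω]
  have hdouble : (∫⁻ x in A, ∫⁻ y in A, ENNReal.ofReal (G x y))
      ≤ ENNReal.ofReal (c₀ + 1 / (2 * π)) := by
    calc ∫⁻ x in A, ∫⁻ y in A, ENNReal.ofReal (G x y)
        ≤ ∫⁻ x in A, (ENNReal.ofReal c₀ + ENNReal.ofReal (1 / (2 * π)) * ENNReal.ofReal x.2) := by
          apply setLIntegral_mono' hAm
          intro x hxA
          calc ∫⁻ y in A, ENNReal.ofReal (G x y)
              ≤ ENNReal.ofReal (c₀ + x.2 / (2 * π)) := inner_bound hA hAm hμ (hA hxA)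
            _ ≤ ENNReal.ofReal c₀ + ENNReal.ofReal (x.2 / (2 * π)) := ENNReal.ofReal_add_le
            _ = ENNReal.ofReal c₀ + ENNReal.ofReal (1 / (2 * π)) * ENNReal.ofReal x.2 := by
                rw [← ENNReal.ofReal_mul (by positivity)]
                congr 1
                ring_nf
      _ = ENNReal.ofReal c₀ * volume A
          + ENNReal.ofReal (1 / (2 * π)) * ∫⁻ x in A, ENNReal.ofReal x.2 := by
          rw [lintegral_add_left measurable_const, setLIntegral_const,
            lintegral_const_mul _ measurable_snd.ennreal_ofReal]
      _ ≤ ENNReal.ofReal c₀ * 1 + ENNReal.ofReal (1 / (2 * π)) * 1 :=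
          add_le_add (mul_le_mul_right hμ _) (mul_le_mul_right him _)
      _ = ENNReal.ofReal (c₀ + 1 / (2 * π)) := by
          rw [mul_one, mul_one, ENNReal.ofReal_add c₀_nonneg (by positivity)]
  have h := ENNReal.toReal_le_of_le_ofReal (add_nonneg c₀_nonneg (by positivity)) hdouble
  linarith

lemma impulse_lintegral {A : Set (ℝ × ℝ)} (hA : A ⊆ H) (hAm : MeasurableSet A)
    {M : ℝ} (hM0 : 0 < M) (hMle : M ≤ 1) (hint : (∫ x in A, x.2) = M) :
    ∫⁻ x in A, ENNReal.ofReal x.2 ≤ 1 := by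
  by_cases hi : IntegrableOn (fun x : ℝ × ℝ => x.2) A volume
  · rw [← ofReal_integral_eq_lintegral_ofReal hi
      (by filter_upwards [ae_restrict_mem hAm] with x hxA; exact (hA hxA).out.le)]
    rw [hint]
    exact ENNReal.ofReal_le_one.mpr hMle
  · rw [integral_undef hi] at hint
    linarith

lemma finrank_prod_real : Module.finrank ℝ (ℝ × ℝ) = 2 := by
  simp [Module.finrank_prod]

lemma map_smul_volume {l : ℝ} (hl : 0 < l) :
    Measure.map (l • · : ℝ × ℝ → ℝ × ℝ) volume = ENNReal.ofReal ((l ^ 2)⁻¹) • volume := by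
  have h := Measure.map_addHaar_smul (volume : Measure (ℝ × ℝ)) (ne_of_gt hl)
  rw [h, finrank_prod_real, abs_of_nonneg (by positivity)]

lemma preimage_smul_set_self {l : ℝ} (hl : 0 < l) (A : Set (ℝ × ℝ)) :
    (l • · : ℝ × ℝ → ℝ × ℝ) ⁻¹' (l • A) = A := by
  ext x
  simp only [Set.mem_preimage]
  rw [Set.mem_smul_set_iff_inv_smul_mem₀ (ne_of_gt hl), smul_smul,
    inv_mul_cancel₀ (ne_of_gt hl), one_smul]

lemma map_restrict_smul {l : ℝ} (hl : 0 < l) {A : Set (ℝ × ℝ)} (hAm : MeasurableSet A) :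
    (volume.restrict A).map (l • · : ℝ × ℝ → ℝ × ℝ)
      = ENNReal.ofReal ((l ^ 2)⁻¹) • volume.restrict (l • A) := by
  have hsm : MeasurableSet (l • A) := hAm.const_smul₀ l
  have h := Measure.restrict_map ((measurable_const_smul l : Measurable fun x : ℝ × ℝ => l • x)) hsm
    (μ := (volume : Measure (ℝ × ℝ)))
  rw [map_smul_volume hl, preimage_smul_set_self hl] at h
  rw [← h, Measure.restrict_smul]

lemma lintegral_smul_set {l : ℝ} (hl : 0 < l) {A : Set (ℝ × ℝ)} (hAm : MeasurableSet A)
    {f : ℝ × ℝ → ℝ≥0∞} (hf : Measurable f) :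
    ∫⁻ x in l • A, f x = ENNReal.ofReal (l ^ 2) * ∫⁻ x in A, f (l • x) := by
  conv_rhs => rw [show (fun x : ℝ × ℝ => f (l • x)) = fun x => f (l • x) from rfl,
    ← lintegral_map hf ((measurable_const_smul l : Measurable fun x : ℝ × ℝ => l • x))]
  rw [map_restrict_smul hl hAm, lintegral_smul_measure, smul_eq_mul, ← mul_assoc,
    ← ENNReal.ofReal_mul (by positivity), mul_inv_cancel₀ (by positivity),
    ENNReal.ofReal_one, one_mul]

lemma integral_smul_set {l : ℝ} (hl : 0 < l) {A : Set (ℝ × ℝ)} (hAm : MeasurableSet A)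
    {f : ℝ × ℝ → ℝ} (hf : Measurable f) :
    ∫ x in l • A, f x = (l ^ 2) * ∫ x in A, f (l • x) := by
  have h1 : ∫ x in A, f (l • x)
      = ∫ x, f x ∂((volume.restrict A).map (l • · : ℝ × ℝ → ℝ × ℝ)) := by
    rw [integral_map ((measurable_const_smul l : Measurable fun x : ℝ × ℝ => l • x)).aemeasurable]
    exact hf.aestronglyMeasurable.mono_ac (Measure.absolutelyContinuous_of_le le_rfl)
  rw [h1, map_restrict_smul hl hAm, integral_smul_measure, ENNReal.toReal_ofReal (by positivity),
    smul_eq_mul, ← mul_assoc, mul_inv_cancel₀ (by positivity), one_mul]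

lemma G_smul {l : ℝ} (hl : 0 < l) (x y : ℝ × ℝ) : G (l • x) (l • y) = G x y := by
  have hGdef : ∀ u v : ℝ × ℝ, G u v = (1 / (4 * π)) *
      Real.log (1 + 4 * u.2 * v.2 / ((u.1 - v.1) ^ 2 + (u.2 - v.2) ^ 2)) := fun _ _ => rfl
  rw [hGdef, hGdef]
  have hfst : ∀ u : ℝ × ℝ, (l • u).1 = l * u.1 := fun u => rfl
  have hsnd : ∀ u : ℝ × ℝ, (l • u).2 = l * u.2 := fun u => rfl
  simp only [hfst, hsnd]
  congr 2
  have hnum : 4 * (l * x.2) * (l * y.2) = l ^ 2 * (4 * x.2 * y.2) := by ring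
  have hden : (l * x.1 - l * y.1) ^ 2 + (l * x.2 - l * y.2) ^ 2
      = l ^ 2 * ((x.1 - y.1) ^ 2 + (x.2 - y.2) ^ 2) := by ring
  rw [hnum, hden, mul_div_mul_left _ _ (by positivity : (l:ℝ) ^ 2 ≠ 0)]

lemma scaled_mem {M : ℝ} (hM0 : 0 < M) (hM1 : M < 1) {ω : ℝ × ℝ → ℝ} (hω : memK 1 ω) :
    ∃ ω' : ℝ × ℝ → ℝ, memK M ω' ∧ energy ω' = M ^ ((4:ℝ)/3) * energy ω := by
  obtain ⟨hint, A, hA, hAm, hae, himp, hvol⟩ := hω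
  set l : ℝ := M ^ ((1:ℝ)/3) with hldef
  have hl0 : 0 < l := Real.rpow_pos_of_pos hM0 _
  have hl1 : l ≤ 1 := (Real.rpow_le_one hM0.le hM1.le (by norm_num))
  have hl3 : l ^ 3 = M := by
    rw [hldef, ← Real.rpow_natCast (M ^ ((1:ℝ)/3)) 3, ← Real.rpow_mul hM0.le]
    norm_num
  have hl4 : l ^ 4 = M ^ ((4:ℝ)/3) := by
    rw [hldef, ← Real.rpow_natCast (M ^ ((1:ℝ)/3)) 4, ← Real.rpow_mul hM0.le]
    norm_num
  set A' : Set (ℝ × ℝ) := l • A with hA'def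
  have hA'm : MeasurableSet A' := hAm.const_smul₀ l
  have hA'H : A' ⊆ H := by
    rintro x ⟨a, ha, rfl⟩
    have : (0:ℝ) < a.2 := (hA ha).out
    show (0:ℝ) < (l • a).2
    show (0:ℝ) < l * a.2
    positivity
  have hvol' : volume A' ≤ 1 := by
    rw [hA'def, Measure.addHaar_smul volume l A, finrank_prod_real]
    calc ENNReal.ofReal |l ^ 2| * volume A ≤ ENNReal.ofReal |l ^ 2| * 1 :=
          mul_le_mul_right hvol _
      _ ≤ 1 := by
          rw [mul_one]
          apply ENNReal.ofReal_le_one.mpr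
          rw [abs_of_nonneg (by positivity)]
          nlinarith
  have himp' : (∫ x in A', x.2) = M := by
    rw [hA'def, integral_smul_set hl0 hAm measurable_snd]
    have : (fun x : ℝ × ℝ => (l • x).2) = fun x : ℝ × ℝ => l * x.2 := rfl
    rw [this, MeasureTheory.integral_const_mul, himp, mul_one, ← hl3]
    ring
  set ω' : ℝ × ℝ → ℝ := A'.indicator (fun _ => (1:ℝ)) with hω'def
  have hω'ae : ∀ᵐ x ∂volume.restrict H, ω' x = A'.indicator (fun _ => (1 : ℝ)) x :=
    ae_of_all _ fun _ => rfl
  have hω'int : Integrable ω' (volume.restrict H) := by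
    rw [hω'def, integrable_indicator_iff hA'm]
    apply (integrableOn_const_iff (C := (1:ℝ))).mpr
    right
    calc (volume.restrict H) A' ≤ volume A' := Measure.restrict_apply_le H A'
      _ ≤ 1 := hvol'
      _ < ⊤ := ENNReal.one_lt_top
  refine ⟨ω', ⟨hω'int, A', hA'H, hA'm, hω'ae, himp', hvol'⟩, ?_⟩
  have hG2 : Measurable fun p : ℝ × ℝ × ℝ × ℝ => (0:ℝ≥0∞) := measurable_const
  have hinner_meas : ∀ B : Set (ℝ × ℝ), Measurable fun x : ℝ × ℝ =>
      ∫⁻ y in B, ENNReal.ofReal (G x y) := by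
    intro B
    apply Measurable.lintegral_prod_right (f := fun x y => ENNReal.ofReal (G x y))
    exact ENNReal.measurable_ofReal.comp measurable_uncurry_G
  have hscale : (∫⁻ x in A', ∫⁻ y in A', ENNReal.ofReal (G x y))
      = ENNReal.ofReal (l ^ 4) * ∫⁻ x in A, ∫⁻ y in A, ENNReal.ofReal (G x y) := by
    rw [hA'def, lintegral_smul_set hl0 hAm (hinner_meas _)]
    have hstep : ∀ x : ℝ × ℝ, (∫⁻ y in l • A, ENNReal.ofReal (G (l • x) y))
        = ENNReal.ofReal (l ^ 2) * ∫⁻ y in A, ENNReal.ofReal (G x y) := by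
      intro x
      rw [lintegral_smul_set hl0 hAm ((measurable_G_left (l • x)).ennreal_ofReal)]
      congr 1
      apply lintegral_congr
      intro y
      rw [G_smul hl0]
    calc ENNReal.ofReal (l ^ 2) * ∫⁻ x in A, ∫⁻ y in l • A, ENNReal.ofReal (G (l • x) y)
        = ENNReal.ofReal (l ^ 2) * ∫⁻ x in A,
            (ENNReal.ofReal (l ^ 2) * ∫⁻ y in A, ENNReal.ofReal (G x y)) := by
          congr 1
          exact lintegral_congr hstep
      _ = ENNReal.ofReal (l ^ 2) * (ENNReal.ofReal (l ^ 2)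
            * ∫⁻ x in A, ∫⁻ y in A, ENNReal.ofReal (G x y)) := by
          rw [lintegral_const_mul _ (hinner_meas A)]
      _ = ENNReal.ofReal (l ^ 4) * ∫⁻ x in A, ∫⁻ y in A, ENNReal.ofReal (G x y) := by
          rw [← mul_assoc, ← ENNReal.ofReal_mul (by positivity)]
          congr 2
          ring
  rw [energy_repr hA'H hA'm hvol' hω'ae, hscale,
    ENNReal.toReal_mul, ENNReal.toReal_ofReal (by positivity),
    energy_repr hA hAm hvol hae, ← hl4]
  ring

end EnergyScalingAux

open EnergyScalingAux

/-- scaling lower bound `I_M ≥ M^{4/3} I₁` for `0 < M < 1`. -/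
theorem maximal_energy_scaling_lower_bound (M : ℝ) (hM0 : 0 < M) (hM1 : M < 1) :
    M ^ ((4 : ℝ) / 3) * Isup 1 ≤ Isup M := by
  have hBdd : BddAbove (energy '' {ω | memK M ω}) := by
    refine ⟨(1/2) * (c₀ + 1/(2*π)), ?_⟩
    rintro e ⟨ω, hω, rfl⟩
    obtain ⟨hint, A, hA, hAm, hae, himp, hvol⟩ := hω
    exact energy_le hA hAm hvol (impulse_lintegral hA hAm hM0 hM1.le himp) hae
  have hnn : ∀ e ∈ energy '' {ω | memK M ω}, 0 ≤ e := by
    rintro e ⟨ω, hω, rfl⟩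
    obtain ⟨hint, A, hA, hAm, hae, himp, hvol⟩ := hω
    exact energy_nonneg hA hAm hvol hae
  have hMpos : (0:ℝ) < M ^ ((4:ℝ)/3) := Real.rpow_pos_of_pos hM0 _
  unfold Isup
  rw [mul_comm, ← le_div_iff₀ hMpos]
  apply Real.sSup_le
  · rintro e ⟨ω, hω, rfl⟩
    rw [le_div_iff₀ hMpos, mul_comm]
    obtain ⟨ω', hω', hE⟩ := scaled_mem hM0 hM1 hω
    rw [← hE]
    exact le_csSup hBdd ⟨ω', hω', rfl⟩
  · exact div_nonneg (Real.sSup_nonneg hnn) hMpos.le
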